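/- arXiv:math/0403320 — 2 statements merged into one kernel-verified Lean document; each statement's English description precedes it below -/
import Mathlib

section
/- Let q, r ≥ 2 be integers and 0 < α < 1. (a) If h₁ : T_q → ℝ is P₁-harmonic (i.e. ∑_y p₁(x,y)h₁(y) = h₁(x) for every x ∈ T_q), then the function h on DL(q,r) defined by h(x₁x₂) = h₁(x₁) is P_α-harmonic. (b) If h₂ : T_r → ℝ is P₂-harmonic, then the function h on DL(q,r) defined by h(x₁x₂) = h₂(x₂) is P_α-harmonic. -/
open scoped Classical

noncomputable section

namespace LampDL

variable {X : Type*}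

/-- `n`-step transition probabilities of the Markov chain with transition matrix `p`. -/
def matpow (p : X → X → ℝ) : ℕ → X → X → ℝ
  | 0 => fun x y => if x = y then 1 else 0
  | n + 1 => fun x y => ∑' z, p x z * matpow p n z y

/-- A (countable) stochastic transition matrix. -/
def IsStochastic (p : X → X → ℝ) : Prop :=
  (∀ x y, 0 ≤ p x y) ∧ ∀ x, HasSum (p x) 1

/-- Irreducibility: some power has positive entry for every pair. -/
def IsIrreducible (p : X → X → ℝ) : Prop := ∀ x y, ∃ n, 0 < matpow p n x y

/-- `hitBefore p A y n x` is the probability that the chain started at `x` avoids `A`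
at all times `< n` and is at `y` at time `n`.  For `y ∈ A`, summing over `n` yields
`F^A(x,y) = Pr_x[s^y ≤ s^A, s^y < ∞]`. -/
def hitBefore (p : X → X → ℝ) (A : Set X) (y : X) : ℕ → X → ℝ
  | 0 => fun x => if x = y then 1 else 0
  | n + 1 => fun x => if x ∈ A then 0 else ∑' z, p x z * hitBefore p A y n z

/-- `F^A(x,y) = Pr_x[s^y ≤ s^A, s^y < ∞]` (for `y ∈ A`). -/
def FA (p : X → X → ℝ) (A : Set X) (x y : X) : ℝ := ∑' n, hitBefore p A y n x

/-- `F(x,y) = Pr_x[s^y < ∞]`, the probability of ever hitting `y` from `x`. -/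
def Fhit (p : X → X → ℝ) (x y : X) : ℝ := FA p {y} x y

/-- A function is `P`-harmonic if `∑_y p(x,y) h(y) = h(x)` for every `x`. -/
def IsHarmonic (p : X → X → ℝ) (h : X → ℝ) : Prop := ∀ x, ∑' y, p x y * h y = h x

/-- A minimal harmonic function (w.r.t. the reference point `o`). -/
def IsMinimalHarmonic (p : X → X → ℝ) (o : X) (h : X → ℝ) : Prop :=
  IsHarmonic p h ∧ (∀ x, 0 ≤ h x) ∧ h o = 1 ∧
    ∀ h₁ : X → ℝ, IsHarmonic p h₁ → (∀ x, 0 ≤ h₁ x) → (∀ x, h₁ x ≤ h x) →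
      ∃ c : ℝ, ∀ x, h₁ x = c * h x

/-- Vertices of the homogeneous tree `T_q`, modelled as pairs `(σ, k)` where
`σ : ℤ → ZMod q` is finitely supported with `σ n = 0` for `n > 0`. -/
structure TV (q : ℕ) where
  σ : ℤ → ZMod q
  k : ℤ
  fin : (Function.support σ).Finite
  upz : ∀ n : ℤ, 0 < n → σ n = 0

lemma fin_aux {q : ℕ} (g : ℤ → ZMod q) (hg : (Function.support g).Finite)
    (f : ℤ → ℤ) (hf : Function.Injective f) :
    (Function.support fun n => if n ≤ 0 then g (f n) else 0).Finite := by
  refine Set.Finite.subset (hg.preimage hf.injOn) ?_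
  intro n hn
  simp only [Function.mem_support] at hn
  by_cases hle : n ≤ 0
  · simp only [hle, if_true] at hn
    simpa [Set.mem_preimage, Function.mem_support] using hn
  · simp [hle] at hn

/-- The predecessor `x⁻` of a vertex of `T_q` (w.r.t. the reference end `ω`). -/
def pred {q : ℕ} (x : TV q) : TV q where
  σ := fun n => if n ≤ 0 then x.σ (n - 1) else 0
  k := x.k - 1
  fin := fin_aux x.σ x.fin (fun n => n - 1) sub_left_injective
  upz := fun n hn => by simp [not_le.mpr hn]

/-- The vertex on the geodesic `ω o` at Busemann level `k` (zero configuration). -/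
def rootAt (q : ℕ) (k : ℤ) : TV q := ⟨fun _ => 0, k, by simp, fun _ _ => rfl⟩

/-- The Diestel–Leader graph `DL(q,r)`. -/
def DL (q r : ℕ) := {x : TV q × TV r // x.1.k + x.2.k = 0}

/-- The root `o = o₁o₂` of `DL(q,r)`. -/
def oDL (q r : ℕ) : DL q r := ⟨(rootAt q 0, rootAt r 0), by simp [rootAt]⟩

/-- The projected transition matrix `P₁ = P_{1,α}` on `T_q`. -/
def p1 (q : ℕ) (α : ℝ) (x y : TV q) : ℝ :=
  if pred y = x then α / (q : ℝ) else if y = pred x then 1 - α else 0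

/-- The projected transition matrix `P₂ = P_{2,1-α}` on `T_r`. -/
def p2 (r : ℕ) (α : ℝ) (x y : TV r) : ℝ :=
  if y = pred x then α else if pred y = x then (1 - α) / (r : ℝ) else 0

/-- The transition matrix `P_α` on `DL(q,r)`. -/
def pDL (q r : ℕ) (α : ℝ) (x y : DL q r) : ℝ :=
  if pred y.val.1 = x.val.1 ∧ y.val.2 = pred x.val.2 then α / (q : ℝ)
  else if y.val.1 = pred x.val.1 ∧ pred y.val.2 = x.val.2 then (1 - α) / (r : ℝ)
  else 0


/-- Ends `ξ ∈ ∂*T_q`: configurations whose support is bounded below. -/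
def BoundedBelowSupp (q : ℕ) (ξ : ℤ → ZMod q) : Prop := ∃ N : ℤ, ∀ n < N, ξ n = 0

/-- Configurations whose support is bounded above. -/
def BoundedAboveSupp (q : ℕ) (ξ : ℤ → ZMod q) : Prop := ∃ N : ℤ, ∀ n > N, ξ n = 0

/-- The confluent level `b(x,ξ)` (level of `x ⋏ ξ` w.r.t. `ω`) of a vertex `x ∈ T_q`
and an end `ξ ∈ ∂*T_q`. -/
def bconf (q : ℕ) (x : TV q) (ξ : ℤ → ZMod q) : ℤ :=
  sInf ({m : ℤ | m ≤ x.k ∧ ξ (m + 1) ≠ x.σ (m + 1 - x.k)} ∪ {x.k})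

/-- `F₁⁻ = F₁(x,x⁻) = min {1, (1-α)/α}`. -/
def F1m (α : ℝ) : ℝ := min 1 ((1 - α) / α)
/-- `F₁⁺ = F₁(x⁻,x) = min {1/q, α/((1-α)q)}`. -/
def F1p (q : ℕ) (α : ℝ) : ℝ := min (1 / (q : ℝ)) (α / ((1 - α) * (q : ℝ)))
/-- `F₂⁻ = min {1, α/(1-α)}`. -/
def F2m (α : ℝ) : ℝ := min 1 (α / (1 - α))
/-- `F₂⁺ = min {1/r, (1-α)/(αr)}`. -/
def F2p (r : ℕ) (α : ℝ) : ℝ := min (1 / (r : ℝ)) ((1 - α) / (α * (r : ℝ)))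

/-- The Martin kernel `K₁(·,ξ₁)` on `T_q`, `ξ₁ ∈ ∂*T_q`. -/
def K1 (q : ℕ) (α : ℝ) (x : TV q) (ξ : ℤ → ZMod q) : ℝ :=
  F1m α ^ x.k * (F1m α * F1p q α) ^ (bconf q (rootAt q 0) ξ - bconf q x ξ)

/-- The Martin kernel `K₂(·,ξ₂)` on `T_r`, `ξ₂ ∈ ∂*T_r`. -/
def K2 (r : ℕ) (α : ℝ) (x : TV r) (ξ : ℤ → ZMod r) : ℝ :=
  F2m α ^ x.k * (F2m α * F2p r α) ^ (bconf r (rootAt r 0) ξ - bconf r x ξ)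

/-- The vertex `u_m = (σ_m, m)` on the geodesic from `ω` to the end encoded by `ξ`. -/
def rayVertex (q : ℕ) (ξ : ℤ → ZMod q) (hξ : BoundedBelowSupp q ξ) (m : ℤ) : TV q where
  σ := fun n => if n ≤ 0 then ξ (m + n) else 0
  k := m
  fin := by
    obtain ⟨N, hN⟩ := hξ
    apply Set.Finite.subset (Set.finite_Icc (N - m) 0)
    intro n hn
    simp only [Function.mem_support] at hn
    by_cases hle : n ≤ 0
    · simp only [hle, if_true] at hn
      have : ¬ (m + n < N) := fun hc => hn (hN _ hc)
      exact Set.mem_Icc.mpr ⟨by omega, hle⟩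
    · simp [hle] at hn
  upz := fun n hn => by simp [not_le.mpr hn]

/-- The rooted subtree `S₁ = S₁^{(n)} ⊆ T_q` with root `a₁ = (0,-n)`. -/
def S1 (q : ℕ) (n : ℕ) : Set (TV q) :=
  {x | -(n : ℤ) ≤ x.k ∧ x.k ≤ (n : ℤ) ∧ pred^[(x.k + (n : ℤ)).toNat] x = rootAt q (-(n : ℤ))}

/-- The set of leaves `∂*S₁` of `S₁^{(n)}`. -/
def S1leaves (q : ℕ) (n : ℕ) : Set (TV q) := {x | x ∈ S1 q n ∧ x.k = (n : ℤ)}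

/-- The boundary `∂S₁ = {a₁} ∪ ∂*S₁` of `S₁^{(n)}`. -/
def S1bd (q : ℕ) (n : ℕ) : Set (TV q) := insert (rootAt q (-(n : ℤ))) (S1leaves q n)

/-- The horocyclic product `S = S^{(n)}` of `S₁` and `S₂` inside `DL(q,r)`. -/
def Sdl (q r : ℕ) (n : ℕ) : Set (DL q r) := {x | x.val.1 ∈ S1 q n ∧ x.val.2 ∈ S1 r n}

/-- The boundary `∂S = (∂*S₁ × {a₂}) ∪ ({a₁} × ∂*S₂)` of `S^{(n)}`. -/
def Sbd (q r : ℕ) (n : ℕ) : Set (DL q r) :=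
  {x | (x.val.1 ∈ S1leaves q n ∧ x.val.2 = rootAt r (-(n : ℤ))) ∨
       (x.val.1 = rootAt q (-(n : ℤ)) ∧ x.val.2 ∈ S1leaves r n)}

/-- A leaf `y₁ ∈ ∂*S₁` together with `a₂` gives a vertex `y₁a₂` of `DL(q,r)`. -/
def liftLeaf1 (q r : ℕ) (n : ℕ) (y : TV q) (hy : y ∈ S1leaves q n) : DL q r :=
  ⟨(y, rootAt r (-(n : ℤ))), by have h2 := hy.2; show y.k + (-(n : ℤ)) = 0; omega⟩

/-- The vertex `a₁y₂` of `DL(q,r)` for a leaf `y₂ ∈ ∂*S₂`. -/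
def liftLeaf2 (q r : ℕ) (n : ℕ) (y : TV r) (hy : y ∈ S1leaves r n) : DL q r :=
  ⟨(rootAt q (-(n : ℤ)), y), by have h2 := hy.2; show (-(n : ℤ)) + y.k = 0; omega⟩



/-- Elements of the lamplighter group `Γ = ℤ_q ≀ ℤ`: pairs `(η,k)` with `η`
finitely supported. -/
structure LP (q : ℕ) where
  η : ℤ → ZMod q
  k : ℤ
  fin : (Function.support η).Finite

/-- The identity element `e = (0,0)` of `ℤ_q ≀ ℤ`. -/
def eLP (q : ℕ) : LP q := ⟨fun _ => 0, 0, by simp⟩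

/-- Multiplication in `ℤ_q ≀ ℤ`: `(η,k)(η',k') = (η + η'(· − k), k + k')`. -/
def lmul {q : ℕ} (g h : LP q) : LP q where
  η := fun n => g.η n + h.η (n - g.k)
  k := g.k + h.k
  fin := by
    have hinj : Function.Injective (fun n : ℤ => n - g.k) := sub_left_injective
    apply Set.Finite.subset (Set.Finite.union g.fin (h.fin.preimage hinj.injOn))
    intro n hn
    simp only [Function.mem_support] at hn
    by_cases h1 : g.η n = 0
    · right
      simp only [Set.mem_preimage, Function.mem_support]
      intro h2
      exact hn (by rw [h1, h2, add_zero])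
    · left; exact h1

/-- The configuration `δ_j^ℓ` with value `ℓ` at `j` and `0` elsewhere. -/
def deltaCfg (q : ℕ) (j : ℤ) (ℓ : ZMod q) : ℤ → ZMod q := fun n => if n = j then ℓ else 0

/-- The group element `(δ_j^ℓ, k) ∈ ℤ_q ≀ ℤ`. -/
def deltaLP (q : ℕ) (j : ℤ) (ℓ : ZMod q) (k : ℤ) : LP q :=
  ⟨deltaCfg q j ℓ, k, by
    apply Set.Finite.subset (Set.finite_singleton j)
    intro n hn
    simp only [Function.mem_support, deltaCfg] at hn
    by_cases h : n = j
    · simpa using h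
    · simp [h] at hn⟩


/-- Adjacency in the tree `T_q`: one vertex is the predecessor of the other. -/
def adjT {q : ℕ} (x y : TV q) : Prop := pred x = y ∨ pred y = x

/-- Adjacency in `DL(q,r)`. -/
def adjDL {q r : ℕ} (x y : DL q r) : Prop :=
  adjT x.val.1 y.val.1 ∧ adjT x.val.2 y.val.2

/-- The identification `Φ : ℤ_q ≀ ℤ → DL(q,q)`, `Φ(η,k) = (η_k⁻,k)(η_k⁺,-k)`. -/
def Phi (q : ℕ) (g : LP q) : DL q q :=
  ⟨(⟨fun n => if n ≤ 0 then g.η (g.k + n) else 0, g.k,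
      fin_aux g.η g.fin (fun n => g.k + n) (add_right_injective g.k),
      fun n hn => by simp [not_le.mpr hn]⟩,
    ⟨fun n => if n ≤ 0 then g.η (g.k + 1 - n) else 0, -g.k,
      fin_aux g.η g.fin (fun n => g.k + 1 - n) sub_right_injective,
      fun n hn => by simp [not_le.mpr hn]⟩),
   by show g.k + -g.k = 0; omega⟩

/-- The transition matrix `Q_α` of the switch–walk–switch walk on `DL^s(q,r)`. -/
def qDL (q r : ℕ) (α : ℝ) (x y : DL q r) : ℝ :=
  if pred (pred y.val.1) = pred x.val.1 ∧ y.val.2 = pred x.val.2 then α / ((q : ℝ) ^ 2)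
  else if pred y.val.1 = pred (pred x.val.1) ∧ pred y.val.2 = x.val.2 then
    (1 - α) / ((q : ℝ) * (r : ℝ))
  else 0

/-- The horocyclic product `D'` of `T_q` and `T_r` at level sum `-1`. -/
def DL' (q r : ℕ) := {x : TV q × TV r // x.1.k + x.2.k = -1}

/-- The transition matrix `P'` on `D'` (same rule as `P_α`). -/
def pDL' (q r : ℕ) (α : ℝ) (x y : DL' q r) : ℝ :=
  if pred y.val.1 = x.val.1 ∧ y.val.2 = pred x.val.2 then α / (q : ℝ)
  else if y.val.1 = pred x.val.1 ∧ pred y.val.2 = x.val.2 then (1 - α) / (r : ℝ)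
  else 0

/-- The map `x₁x₂ ↦ x₁⁻x₂` from `DL^s(q,r)` onto `D'`. -/
def toDL' {q r : ℕ} (x : DL q r) : DL' q r :=
  ⟨(pred x.val.1, x.val.2), by
    have h := x.property; show x.val.1.k - 1 + x.val.2.k = -1; omega⟩

/-- Harmonicity for the simple ("walk forward and switch, or switch and walk
backward") lamplighter walk on `ℤ_q ≀ ℤ`, whose law is uniform on
`{(δ₁^ℓ,1), (δ₀^ℓ,-1) : ℓ ∈ ZMod q}`. -/
def SRWHarmonic (q : ℕ) [NeZero q] (h : LP q → ℝ) : Prop :=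
  ∀ g : LP q,
    (∑ ℓ : ZMod q, (h (lmul g (deltaLP q 1 ℓ 1)) + h (lmul g (deltaLP q 0 ℓ (-1)))))
      / (2 * (q : ℝ)) = h g

/-- The step `(δ₀^ℓ + δ₁^m, 1)` of the switch–walk–switch walk. -/
def swsStepP (q : ℕ) (ℓ m : ZMod q) : LP q :=
  ⟨fun n => if n = 0 then ℓ else if n = 1 then m else 0, 1, by
    apply Set.Finite.subset ((Set.finite_singleton 1).insert (0:ℤ))
    intro n hn
    simp only [Function.mem_support] at hn
    by_cases h0 : n = 0
    · simp [h0]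
    · by_cases h1 : n = 1
      · simp [h1]
      · simp [h0, h1] at hn⟩

/-- The step `(δ₀^ℓ + δ_{-1}^m, -1)` of the switch–walk–switch walk. -/
def swsStepM (q : ℕ) (ℓ m : ZMod q) : LP q :=
  ⟨fun n => if n = 0 then ℓ else if n = -1 then m else 0, -1, by
    apply Set.Finite.subset ((Set.finite_singleton (-1:ℤ)).insert (0:ℤ))
    intro n hn
    simp only [Function.mem_support] at hn
    by_cases h0 : n = 0
    · simp [h0]
    · by_cases h1 : n = (-1 : ℤ)
      · simp [h1]
      · simp [h0, h1] at hn⟩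

/-- Harmonicity for the switch–walk–switch lamplighter walk on `ℤ_q ≀ ℤ`, whose law
is uniform on `{(δ₀^ℓ + δ₁^m, 1), (δ₀^ℓ + δ_{-1}^m, -1) : ℓ, m ∈ ZMod q}`. -/
def SWSHarmonic (q : ℕ) [NeZero q] (h : LP q → ℝ) : Prop :=
  ∀ g : LP q,
    (∑ ℓ : ZMod q, ∑ m : ZMod q,
        (h (lmul g (swsStepP q ℓ m)) + h (lmul g (swsStepM q ℓ m))))
      / (2 * (q : ℝ) ^ 2) = h g

/-- The positive defect `df⁺((η,k),ξ₁)`. -/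
def dfPlus (q : ℕ) (g : LP q) (ξ : ℤ → ZMod q) : ℤ :=
  sInf ({n : ℤ | n ≤ g.k ∧ ξ (n + 1) ≠ g.η (n + 1)} ∪ {g.k}) -
    sInf ({m : ℤ | m ≤ 0 ∧ ξ (m + 1) ≠ 0} ∪ {0})

/-- The negative defect `df⁻((η,k),ξ₂)`. -/
def dfMinus (q : ℕ) (g : LP q) (ξ : ℤ → ZMod q) : ℤ :=
  sSup ({m : ℤ | 0 < m ∧ ξ m ≠ 0} ∪ {0}) -
    sSup ({n : ℤ | g.k < n ∧ ξ n ≠ g.η n} ∪ {g.k})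

/-- The defect `df⊕((η,k),ξ₁)` for the switch–walk–switch walk. -/
def dfOPlus (q : ℕ) (g : LP q) (ξ : ℤ → ZMod q) : ℤ :=
  sInf ({n : ℤ | n ≤ g.k ∧ ξ n ≠ g.η n} ∪ {g.k}) -
    sInf ({m : ℤ | m ≤ 0 ∧ ξ m ≠ 0} ∪ {0})

/-! A step of `P_α` moves the first coordinate exactly as `P₁` does: to each of the `q`
successors with probability `α/q`, or back to the predecessor with total probability `1 - α`,
spread over the `r` successors chosen in `T_r`. So `P_α (h₁ ∘ π₁) = (P₁ h₁) ∘ π₁`, and likewise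
`P_α (h₂ ∘ π₂) = (P₂ h₂) ∘ π₂`. -/

namespace TV

variable {q : ℕ}

theorem ext {x y : TV q} (hσ : x.σ = y.σ) (hk : x.k = y.k) : x = y := by
  cases x; cases y; simp_all

/-- The `ℓ`-th successor of `x`: shift the configuration one step down and write `ℓ` at `0`. -/
def child (x : TV q) (ℓ : ZMod q) : TV q where
  σ := Function.update (fun n => if n ≤ 0 then x.σ (n + 1) else 0) 0 ℓ
  k := x.k + 1
  fin := by
    refine ((fin_aux x.σ x.fin (· + 1) (add_left_injective 1)).insert 0).subset fun n hn => ?_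
    rcases eq_or_ne n 0 with rfl | hn0
    · exact Set.mem_insert 0 _
    · exact Set.mem_insert_of_mem 0 (by simpa [Function.update_of_ne hn0] using hn)
  upz n hn := by simp [Function.update_of_ne hn.ne', not_le.mpr hn]

@[simp]
theorem k_child (x : TV q) (ℓ : ZMod q) : (x.child ℓ).k = x.k + 1 := rfl

@[simp]
theorem k_pred (x : TV q) : (pred x).k = x.k - 1 := rfl

@[simp]
theorem pred_child (x : TV q) (ℓ : ZMod q) : pred (x.child ℓ) = x := by
  refine ext (funext fun n => ?_) (by simp)
  by_cases hn : n ≤ 0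
  · simp [pred, child, hn, Function.update_of_ne (show n - 1 ≠ 0 by omega),
      show n - 1 ≤ 0 by omega]
  · simp [pred, hn, x.upz n (by omega)]

theorem child_σ_zero_of_pred_eq {x z : TV q} (h : pred z = x) : x.child (z.σ 0) = z := by
  subst h
  refine ext (funext fun n => ?_) (by simp)
  rcases lt_trichotomy n 0 with hn | rfl | hn
  · simp [child, pred, Function.update_of_ne hn.ne, hn.le, hn]
  · simp [child]
  · simp [child, Function.update_of_ne hn.ne', not_le.mpr hn, z.upz n hn]

theorem pred_eq_iff {x z : TV q} : pred z = x ↔ ∃ ℓ, x.child ℓ = z :=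
  ⟨fun h => ⟨_, child_σ_zero_of_pred_eq h⟩, fun ⟨ℓ, h⟩ => h ▸ pred_child x ℓ⟩

theorem child_injective (x : TV q) : Function.Injective x.child := fun a b h => by
  simpa [child] using congrArg (fun z : TV q => z.σ 0) h

theorem child_ne_pred (x : TV q) (ℓ : ZMod q) : x.child ℓ ≠ pred x := fun h => by
  have := congrArg TV.k h
  simp at this
  omega

theorem pred_pred_ne (x : TV q) : pred (pred x) ≠ x := fun h => by
  have := congrArg TV.k h
  simp at this
  omega

def nbr (x : TV q) : Option (ZMod q) → TV q
  | none => pred x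
  | some ℓ => x.child ℓ

theorem nbr_injective (x : TV q) : Function.Injective x.nbr
  | none, none, _ => rfl
  | none, some _, h => (child_ne_pred x _ h.symm).elim
  | some _, none, h => (child_ne_pred x _ h).elim
  | some _, some _, h => congrArg some (child_injective x h)

theorem mem_range_nbr {x y : TV q} (h : y = pred x ∨ pred y = x) : y ∈ Set.range x.nbr := by
  rcases h with rfl | h
  · exact ⟨none, rfl⟩
  · obtain ⟨ℓ, rfl⟩ := pred_eq_iff.mp h
    exact ⟨some ℓ, rfl⟩

theorem tsum_mul_eq_pred_add_sum_child [NeZero q] (p : TV q → TV q → ℝ) (x : TV q)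
    (hp : ∀ y, p x y ≠ 0 → y = pred x ∨ pred y = x) (h : TV q → ℝ) :
    ∑' y, p x y * h y = p x (pred x) * h (pred x) + ∑ ℓ, p x (x.child ℓ) * h (x.child ℓ) := by
  have hsupp : Function.support (fun y => p x y * h y) ⊆ Set.range x.nbr :=
    fun y hy => mem_range_nbr (hp y (left_ne_zero_of_mul hy))
  rw [← (nbr_injective x).tsum_eq hsupp, tsum_fintype, Fintype.sum_option]
  rfl

end TV

section Trees

variable {q : ℕ} [NeZero q] (α : ℝ)

theorem tsum_p1_mul (h : TV q → ℝ) (x : TV q) :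
    ∑' y, p1 q α x y * h y = (1 - α) * h (pred x) + ∑ ℓ, α / q * h (x.child ℓ) := by
  rw [TV.tsum_mul_eq_pred_add_sum_child _ x (fun y hy => ?_) h]
  · simp [p1, TV.pred_pred_ne]
  · unfold p1 at hy
    split_ifs at hy <;> tauto

theorem tsum_p2_mul (h : TV q → ℝ) (x : TV q) :
    ∑' y, p2 q α x y * h y = α * h (pred x) + ∑ ℓ, (1 - α) / q * h (x.child ℓ) := by
  rw [TV.tsum_mul_eq_pred_add_sum_child _ x (fun y hy => ?_) h]
  · simp [p2, TV.child_ne_pred]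
  · unfold p2 at hy
    split_ifs at hy <;> tauto

end Trees

namespace DL

variable {q r : ℕ}

def up (x : DL q r) (ℓ : ZMod q) : DL q r :=
  ⟨(x.val.1.child ℓ, pred x.val.2), by have := x.property; simp; omega⟩

def down (x : DL q r) (m : ZMod r) : DL q r :=
  ⟨(pred x.val.1, x.val.2.child m), by have := x.property; simp; omega⟩

def nbr (x : DL q r) : ZMod q ⊕ ZMod r → DL q r := Sum.elim x.up x.down

theorem nbr_injective (x : DL q r) : Function.Injective x.nbr := by
  refine Function.Injective.sumElim (fun a b h => ?_) (fun a b h => ?_) fun a b h => ?_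
  · exact TV.child_injective _ (congrArg (fun z : DL q r => z.val.1) h)
  · exact TV.child_injective _ (congrArg (fun z : DL q r => z.val.2) h)
  · have := congrArg (fun z : DL q r => z.val.1.k) h
    simp [up, down] at this
    omega

theorem support_pDL_subset_range_nbr (α : ℝ) (x : DL q r) :
    Function.support (pDL q r α x) ⊆ Set.range x.nbr := by
  intro y hy
  rw [Function.mem_support, pDL] at hy
  split_ifs at hy with h₁ h₂
  · obtain ⟨ℓ, hℓ⟩ := TV.pred_eq_iff.mp h₁.1
    exact ⟨Sum.inl ℓ, Subtype.ext (Prod.ext hℓ h₁.2.symm)⟩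
  · obtain ⟨m, hm⟩ := TV.pred_eq_iff.mp h₂.2
    exact ⟨Sum.inr m, Subtype.ext (Prod.ext h₂.1.symm hm)⟩
  · exact (hy rfl).elim

theorem tsum_pDL_mul [NeZero q] [NeZero r] (α : ℝ) (H : DL q r → ℝ) (x : DL q r) :
    ∑' y, pDL q r α x y * H y
      = ∑ ℓ, α / q * H (x.up ℓ) + ∑ m, (1 - α) / r * H (x.down m) := by
  have hsupp : Function.support (fun y => pDL q r α x y * H y) ⊆ Set.range x.nbr :=
    fun y hy => support_pDL_subset_range_nbr α x (left_ne_zero_of_mul hy)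
  rw [← (nbr_injective x).tsum_eq hsupp, tsum_fintype, Fintype.sum_sum_type]
  simp [nbr, pDL, up, down, TV.pred_pred_ne]

end DL

theorem sum_zmod_div_mul_const (n : ℕ) [NeZero n] (c a : ℝ) :
    ∑ _m : ZMod n, c / n * a = c * a := by
  have : (n : ℝ) ≠ 0 := Nat.cast_ne_zero.mpr (NeZero.ne n)
  rw [Finset.sum_const, Finset.card_univ, ZMod.card, nsmul_eq_mul]
  field_simp

theorem isHarmonic_pDL_comp_fst (q r : ℕ) [NeZero q] [NeZero r] (α : ℝ) (h₁ : TV q → ℝ)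
    (hh₁ : IsHarmonic (p1 q α) h₁) : IsHarmonic (pDL q r α) fun x : DL q r => h₁ x.val.1 := by
  intro x
  dsimp only
  rw [DL.tsum_pDL_mul, ← hh₁ x.val.1, tsum_p1_mul]
  simp only [DL.up, DL.down, sum_zmod_div_mul_const]
  ring

theorem isHarmonic_pDL_comp_snd (q r : ℕ) [NeZero q] [NeZero r] (α : ℝ) (h₂ : TV r → ℝ)
    (hh₂ : IsHarmonic (p2 r α) h₂) : IsHarmonic (pDL q r α) fun x : DL q r => h₂ x.val.2 := by
  intro x
  dsimp only
  rw [DL.tsum_pDL_mul, ← hh₂ x.val.2, tsum_p2_mul]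
  simp only [DL.up, DL.down, sum_zmod_div_mul_const]

theorem lift_harmonic_general (q r : ℕ) (hq : 2 ≤ q) (hr : 2 ≤ r) (α : ℝ) :
    (∀ h₁ : TV q → ℝ, IsHarmonic (p1 q α) h₁ →
        IsHarmonic (pDL q r α) fun x : DL q r => h₁ x.val.1) ∧
    (∀ h₂ : TV r → ℝ, IsHarmonic (p2 r α) h₂ →
        IsHarmonic (pDL q r α) fun x : DL q r => h₂ x.val.2) := by
  have : NeZero q := ⟨by omega⟩
  have : NeZero r := ⟨by omega⟩
  exact ⟨isHarmonic_pDL_comp_fst q r α, isHarmonic_pDL_comp_snd q r α⟩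

/-- lifting harmonic functions from the two trees to `DL(q,r)`. -/
theorem lift_harmonic (q r : ℕ) (hq : 2 ≤ q) (hr : 2 ≤ r) (α : ℝ) (hα0 : 0 < α)
    (hα1 : α < 1) :
    (∀ h₁ : TV q → ℝ, IsHarmonic (p1 q α) h₁ →
        IsHarmonic (pDL q r α) fun x : DL q r => h₁ x.val.1) ∧
    (∀ h₂ : TV r → ℝ, IsHarmonic (p2 r α) h₂ →
        IsHarmonic (pDL q r α) fun x : DL q r => h₂ x.val.2) :=
  lift_harmonic_general q r hq hr α

end LampDL
end
end

section
/- Let q, r ≥ 2 be integers and 0 < α < 1. If h is a non-negative P_α-harmonic function on DL(q,r), then there exist a non-negative P₁-harmonic function h₁ on T_q and a non-negative P₂-harmonic function h₂ on T_r such that h(x₁x₂) = h₁(x₁) + h₂(x₂) for all x₁x₂ ∈ DL(q,r). -/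
open scoped Classical

noncomputable section

namespace LampDL

variable {X : Type*}

lemma TV.ext' {q : ℕ} {x y : TV q} (h1 : x.σ = y.σ) (h2 : x.k = y.k) : x = y := by
  cases x; cases y; simp_all

def child {q : ℕ} (x : TV q) (c : ZMod q) : TV q where
  σ := fun n => if n ≤ 0 then (fun m => if m = 1 then c else x.σ m) (n + 1) else 0
  k := x.k + 1
  fin := fin_aux (fun m => if m = 1 then c else x.σ m) (by
      apply Set.Finite.subset (x.fin.union (Set.finite_singleton 1))
      intro m hm
      simp only [Function.mem_support] at hm
      by_cases h : m = 1
      · right; simp [h]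
      · left; simpa [Function.mem_support, h] using hm) _ (add_left_injective 1)
  upz := fun n hn => by simp [not_le.mpr hn]

@[simp] lemma child_k {q : ℕ} (x : TV q) (c : ZMod q) : (child x c).k = x.k + 1 := rfl
@[simp] lemma pred_k {q : ℕ} (x : TV q) : (pred x).k = x.k - 1 := rfl
@[simp] lemma rootAt_k (q : ℕ) (j : ℤ) : (rootAt q j).k = j := rfl
@[simp] lemma child_σ_zero {q : ℕ} (x : TV q) (c : ZMod q) : (child x c).σ 0 = c := by
  simp [child]

lemma pred_child {q : ℕ} (x : TV q) (c : ZMod q) : pred (child x c) = x := by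
  refine TV.ext' (funext fun n => ?_) (by simp [pred])
  show (if n ≤ 0 then (child x c).σ (n - 1) else 0) = x.σ n
  by_cases hn : n ≤ 0
  · have h1 : n - 1 ≤ 0 := by omega
    have h2 : n - 1 + 1 ≠ 1 := by omega
    simp only [hn, if_true, child, h1, if_true, h2, if_false]
    norm_num
  · simp [hn, x.upz n (by omega)]

lemma eq_child_of_pred {q : ℕ} {x y : TV q} (h : pred y = x) : y = child x (y.σ 0) := by
  have hk : x.k = y.k - 1 := by rw [← h]; rfl
  have hσ : ∀ m : ℤ, x.σ m = if m ≤ 0 then y.σ (m - 1) else 0 := by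
    intro m; rw [← h]; rfl
  refine TV.ext' (funext fun n => ?_) (by simp; omega)
  show y.σ n = if n ≤ 0 then (if n + 1 = 1 then y.σ 0 else x.σ (n + 1)) else 0
  by_cases hn : n ≤ 0
  · by_cases h0 : n = 0
    · simp [hn, h0]
    · have h1 : n + 1 ≠ 1 := by omega
      have h2 : n + 1 ≤ 0 := by omega
      simp only [hn, if_true, h1, if_false, hσ, h2, add_sub_cancel_right]
  · simp [hn, y.upz n (by omega)]

lemma child_injective {q : ℕ} (x : TV q) : Function.Injective (child x) := by
  intro c c' h
  have := congrArg (fun z : TV q => z.σ 0) h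
  simpa using this

lemma pred_iter_k {q : ℕ} (x : TV q) (m : ℕ) : (pred^[m] x).k = x.k - m := by
  induction m generalizing x with
  | zero => simp
  | succ m ih =>
    rw [Function.iterate_succ_apply, ih]
    simp only [pred_k]; push_cast; ring

lemma pred_iter_σ {q : ℕ} (x : TV q) (m : ℕ) (n : ℤ) :
    (pred^[m] x).σ n = if n ≤ 0 then x.σ (n - m) else 0 := by
  induction m generalizing x n with
  | zero =>
    by_cases hn : n ≤ 0
    · simp [hn]
    · simp [hn, x.upz n (by omega)]
  | succ m ih =>
    rw [Function.iterate_succ_apply, ih]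
    by_cases hn : n ≤ 0
    · have h2 : n - m ≤ 0 := by omega
      simp only [hn, if_true, pred, h2, if_true]
      congr 1; push_cast; ring
    · simp [hn]



lemma mem_S1_of {q : ℕ} {n : ℕ} {x : TV q} (h1 : -(n : ℤ) ≤ x.k) (h2 : x.k ≤ n)
    (h3 : ∀ i : ℤ, i ≤ -(x.k + n) → x.σ i = 0) : x ∈ S1 q n := by
  refine ⟨h1, h2, TV.ext' (funext fun j => ?_) ?_⟩
  · rw [pred_iter_σ]
    show _ = (0 : ZMod q)
    by_cases hj : j ≤ 0
    · simp only [hj, if_true]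
      apply h3
      have : ((x.k + n).toNat : ℤ) = x.k + n := by omega
      omega
    · simp [hj]
  · rw [pred_iter_k]; simp; omega

lemma S1_σ_zero {q : ℕ} {n : ℕ} {x : TV q} (hx : x ∈ S1 q n) :
    ∀ i : ℤ, i ≤ -(x.k + n) → x.σ i = 0 := by
  intro i hi
  have h := hx.2.2
  have hk : ((x.k + n).toNat : ℤ) = x.k + n := by have := hx.1; omega
  have := congrArg (fun z : TV q => z.σ (i + (x.k + n))) h
  simp only [pred_iter_σ] at this
  have hj : i + (x.k + n) ≤ 0 := by omega
  simpa [hj, hk, show i + (x.k + n) - (x.k + n) = i by ring, rootAt] using this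

lemma child_mem_S1 {q : ℕ} {n : ℕ} {x : TV q} (hx : x ∈ S1 q n) (hk : x.k < n)
    (c : ZMod q) : child x c ∈ S1 q n := by
  refine ⟨by have := hx.1; simp; omega, by simp; omega, ?_⟩
  have hm : ((child x c).k + (n : ℤ)).toNat = (x.k + n).toNat + 1 := by
    have := hx.1; simp; omega
  rw [hm, Function.iterate_succ_apply, pred_child]
  exact hx.2.2

lemma pred_mem_S1 {q : ℕ} {n : ℕ} {x : TV q} (hx : x ∈ S1 q n) (hk : -(n : ℤ) < x.k) :
    pred x ∈ S1 q n := by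
  refine ⟨by simp; omega, by have := hx.2.1; simp; omega, ?_⟩
  have hm : (x.k + (n : ℤ)).toNat = ((pred x).k + (n : ℤ)).toNat + 1 := by simp; omega
  have := hx.2.2
  rw [hm, Function.iterate_succ_apply] at this
  exact this

lemma eq_root_of_mem_S1 {q : ℕ} {n : ℕ} {x : TV q} (hx : x ∈ S1 q n) (hk : x.k = -(n : ℤ)) :
    x = rootAt q (-(n : ℤ)) := by
  have := hx.2.2
  rwa [hk, show (-(n : ℤ) + n).toNat = 0 by omega, Function.iterate_zero_apply] at this

lemma rootAt_mem_S1 {q : ℕ} {n : ℕ} {j : ℤ} (h1 : -(n : ℤ) ≤ j) (h2 : j ≤ n) :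
    rootAt q j ∈ S1 q n :=
  mem_S1_of h1 h2 (fun _ _ => rfl)

lemma S1_finite (q n : ℕ) [NeZero q] : (S1 q n).Finite := by
  have hinj : Function.Injective (fun x : ↥(S1 q n) =>
      ((fun i : Finset.Icc (-(2 * n : ℤ)) 0 => x.val.σ i,
        (⟨x.val.k, by have := x.2.1; have := x.2.2.1; simp [Finset.mem_Icc]; omega⟩ :
          Finset.Icc (-(n : ℤ)) (n : ℤ))) :
        (Finset.Icc (-(2 * n : ℤ)) 0 → ZMod q) × Finset.Icc (-(n : ℤ)) (n : ℤ))) := by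
    intro x y hxy
    obtain ⟨h1, h2⟩ := Prod.mk.injEq .. ▸ hxy
    have hk : x.val.k = y.val.k := by
      have := congrArg Subtype.val h2; simpa using this
    refine Subtype.ext (TV.ext' (funext fun i => ?_) hk)
    by_cases hi : i ∈ Finset.Icc (-(2 * n : ℤ)) 0
    · exact congrFun h1 ⟨i, hi⟩
    · simp only [Finset.mem_Icc, not_and_or, not_le] at hi
      rcases hi with hi | hi
      · rw [S1_σ_zero x.2 i (by have := x.2.2.1; omega),
          S1_σ_zero y.2 i (by have := y.2.2.1; omega)]
      · rw [x.val.upz i hi, y.val.upz i hi]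
  haveI : Finite ↥(S1 q n) := Finite.of_injective _ hinj
  exact Set.toFinite _




lemma p2_eq_p1 (r : ℕ) (α : ℝ) (x y : TV r) : p2 r α x y = p1 r (1 - α) x y := by
  unfold p1 p2
  by_cases h1 : pred y = x
  · by_cases h2 : y = pred x
    · exfalso
      have := congrArg TV.k h1
      have := congrArg TV.k h2
      simp at *; omega
    · simp [h1, h2]
  · simp [h1]

def Ntree {q : ℕ} [NeZero q] (x : TV q) : Finset (TV q) :=
  insert (pred x) (Finset.univ.image (child x))

lemma pred_not_mem_image {q : ℕ} [NeZero q] (x : TV q) :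
    pred x ∉ Finset.univ.image (child x) := by
  simp only [Finset.mem_image, Finset.mem_univ, true_and, not_exists]
  intro c h
  have := congrArg TV.k h
  simp at this; omega

lemma p1_eq_zero_of_not_mem {q : ℕ} [NeZero q] {β : ℝ} {x z : TV q} (hz : z ∉ Ntree x) :
    p1 q β x z = 0 := by
  unfold p1
  by_cases h1 : pred z = x
  · exfalso
    apply hz
    simp only [Ntree, Finset.mem_insert, Finset.mem_image, Finset.mem_univ, true_and]
    exact Or.inr ⟨z.σ 0, (eq_child_of_pred h1).symm⟩
  · by_cases h2 : z = pred x
    · exact absurd (by simp [Ntree, h2]) hz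
    · simp [h1, h2]

lemma sum_Ntree {q : ℕ} [NeZero q] (β : ℝ) (x : TV q) (F : TV q → ℝ) :
    ∑ z ∈ Ntree x, p1 q β x z * F z
      = (1 - β) * F (pred x) + (β / q) * ∑ c : ZMod q, F (child x c) := by
  rw [Ntree, Finset.sum_insert (pred_not_mem_image x)]
  have h1 : p1 q β x (pred x) = 1 - β := by
    unfold p1
    have hne : pred (pred x) ≠ x := by
      intro h; have := congrArg TV.k h; simp at this; omega
    simp [hne]
  rw [h1, Finset.sum_image (fun c _ c' _ h => child_injective x h)]
  have h2 : ∀ c : ZMod q, p1 q β x (child x c) = β / q := by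
    intro c; unfold p1; simp [pred_child]
  simp_rw [h2, Finset.mul_sum]

lemma p1_tsum {q : ℕ} [NeZero q] (β : ℝ) (x : TV q) (F : TV q → ℝ) :
    ∑' z, p1 q β x z * F z
      = (1 - β) * F (pred x) + (β / q) * ∑ c : ZMod q, F (child x c) := by
  rw [tsum_eq_sum (s := Ntree x)
    (fun z hz => by rw [p1_eq_zero_of_not_mem hz, zero_mul]), sum_Ntree]

lemma sum_subtype_Ntree {q : ℕ} [NeZero q] (β : ℝ) {S : Set (TV q)} [Fintype ↥S]
    (x : TV q) (F : TV q → ℝ) (hF0 : ∀ z, z ∉ S → F z = 0) :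
    ∑ z : ↥S, p1 q β x ↑z * F ↑z
      = (1 - β) * F (pred x) + (β / q) * ∑ c : ZMod q, F (child x c) := by
  rw [← sum_Ntree]
  rw [Finset.sum_set_coe (f := fun z => p1 q β x z * F z)]
  have h2 : ∑ z ∈ S.toFinset, p1 q β x z * F z
      = ∑ z ∈ S.toFinset ∪ Ntree x, p1 q β x z * F z := by
    apply Finset.sum_subset Finset.subset_union_left
    intro z _ hz
    rw [hF0 z (by simpa using hz), mul_zero]
  have h3 : ∑ z ∈ Ntree x, p1 q β x z * F z
      = ∑ z ∈ S.toFinset ∪ Ntree x, p1 q β x z * F z := by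
    apply Finset.sum_subset Finset.subset_union_right
    intro z _ hz
    rw [p1_eq_zero_of_not_mem hz, zero_mul]
  rw [h2, ← h3]





def up {q r : ℕ} (x : DL q r) (c : ZMod q) : DL q r :=
  ⟨(child x.val.1 c, pred x.val.2), by
    have := x.property; simp only [child_k, pred_k]; omega⟩

def down {q r : ℕ} (x : DL q r) (d : ZMod r) : DL q r :=
  ⟨(pred x.val.1, child x.val.2 d), by
    have := x.property; simp only [child_k, pred_k]; omega⟩

lemma DL.ext' {q r : ℕ} {x y : DL q r} (h1 : x.val.1 = y.val.1) (h2 : x.val.2 = y.val.2) :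
    x = y := Subtype.ext (Prod.ext h1 h2)

lemma pDL_zero {q r : ℕ} [NeZero q] [NeZero r] {α : ℝ} {x z : DL q r}
    (hz : z ∉ (Finset.univ.image (up x)) ∪ (Finset.univ.image (down x))) :
    pDL q r α x z = 0 := by
  unfold pDL
  simp only [Finset.mem_union, Finset.mem_image, Finset.mem_univ, true_and, not_or,
    not_exists] at hz
  by_cases h1 : pred z.val.1 = x.val.1 ∧ z.val.2 = pred x.val.2
  · exact absurd (DL.ext' (q := q) (r := r) (x := up x (z.val.1.σ 0)) (y := z)
      (eq_child_of_pred h1.1).symm h1.2.symm) (hz.1 _)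
  · by_cases h2 : z.val.1 = pred x.val.1 ∧ pred z.val.2 = x.val.2
    · exact absurd (DL.ext' (q := q) (r := r) (x := down x (z.val.2.σ 0)) (y := z)
        h2.1.symm (eq_child_of_pred h2.2).symm) (hz.2 _)
    · simp [h1, h2]

lemma harm_sum {q r : ℕ} [NeZero q] [NeZero r] {α : ℝ} {h : DL q r → ℝ}
    (hharm : IsHarmonic (pDL q r α) h) (x : DL q r) :
    (α / q) * ∑ c : ZMod q, h (up x c) + ((1 - α) / r) * ∑ d : ZMod r, h (down x d)
      = h x := by
  have := hharm x
  rw [tsum_eq_sum (s := (Finset.univ.image (up x)) ∪ (Finset.univ.image (down x)))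
    (fun z hz => by rw [pDL_zero hz, zero_mul])] at this
  rw [← this]
  have hdisj : Disjoint (Finset.univ.image (up x)) (Finset.univ.image (down x)) := by
    rw [Finset.disjoint_left]
    intro z hz1 hz2
    simp only [Finset.mem_image, Finset.mem_univ, true_and] at hz1 hz2
    obtain ⟨c, hc⟩ := hz1; obtain ⟨d, hd⟩ := hz2
    have h1 := congrArg (fun w : DL q r => w.val.1.k) hc
    have h2 := congrArg (fun w : DL q r => w.val.1.k) hd
    simp only [up, down, child_k, pred_k] at h1 h2
    omega
  rw [Finset.sum_union hdisj]
  have hui : Function.Injective (up x) := by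
    intro c c' hcc
    exact child_injective x.val.1 (congrArg (fun w : DL q r => w.val.1) hcc)
  have hdi : Function.Injective (down x) := by
    intro d d' hdd
    exact child_injective x.val.2 (congrArg (fun w : DL q r => w.val.2) hdd)
  rw [Finset.sum_image (fun c _ c' _ hc => hui hc),
    Finset.sum_image (fun d _ d' _ hd => hdi hd)]
  have h1 : ∀ c : ZMod q, pDL q r α x (up x c) = α / q := by
    intro c; unfold pDL
    simp [up, pred_child]
  have h2 : ∀ d : ZMod r, pDL q r α x (down x d) = (1 - α) / r := by
    intro d; unfold pDL
    have hne : ¬(pred (pred x.val.1) = x.val.1) := by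
      intro hcon; have := congrArg TV.k hcon; simp at this; omega
    simp [down, pred_child, hne]
  simp_rw [h1, h2, Finset.mul_sum]


lemma oneD_max {α : ℝ} (hα0 : 0 < α) (hα1 : α < 1) {a b : ℤ} {M : ℤ → ℝ}
    (hM : ∀ k, a < k → k < b → M k ≤ α * M (k + 1) + (1 - α) * M (k - 1))
    (ha : M a ≤ 0) (hb : M b ≤ 0) : ∀ k, a ≤ k → k ≤ b → M k ≤ 0 := by
  intro k hak hkb
  by_contra hpos
  push_neg at hpos
  rcases eq_or_lt_of_le hak with rfl | hak'
  · exact absurd ha (by linarith)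
  rcases eq_or_lt_of_le hkb with rfl | hkb'
  · exact absurd hb (by linarith)
  have key : ∀ j, a ≤ j → M j < M (j + 1) →
      ∀ i, j ≤ i → (i < b → M i < M (i + 1)) := by
    intro j hja hstep
    refine Int.le_induction (motive := fun i _ => i < b → M i < M (i + 1)) (fun _ => hstep) ?_
    intro m hjm ih hmb
    have h1 : M m < M (m + 1) := ih (by omega)
    have h2 := hM (m + 1) (by omega) hmb
    rw [show m + 1 + 1 = m + 2 by ring, show m + 1 - 1 = m by ring] at h2
    have h4 : (1 - α) * M m < (1 - α) * M (m + 1) :=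
      mul_lt_mul_of_pos_left h1 (by linarith)
    have h3 : α * M (m + 1) < α * M (m + 2) := by linarith
    have := (mul_lt_mul_iff_right₀ hα0).mp h3
    rw [show m + 1 + 1 = m + 2 by ring]
    exact this
  by_cases hex : ∃ j, a ≤ j ∧ j < k ∧ M j < M (j + 1)
  · obtain ⟨j, hja, hjk, hstep⟩ := hex
    have mono : ∀ i, k ≤ i → i ≤ b → M k ≤ M i := by
      refine Int.le_induction (motive := fun i _ => i ≤ b → M k ≤ M i) (fun _ => le_refl _) ?_
      intro m hkm ih hmb
      have h1 : M m < M (m + 1) := key j hja hstep m (by omega) (by omega)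
      have := ih (by omega)
      linarith
    have := mono b (by omega) (le_refl _)
    linarith
  · push_neg at hex
    have down : ∀ i, a ≤ i → i ≤ k → M i ≤ M a := by
      refine Int.le_induction (motive := fun i _ => i ≤ k → M i ≤ M a) (fun _ => le_refl _) ?_
      intro m ham ih hmb
      have h1 : ¬ (M m < M (m + 1)) := by
        intro hcon
        exact absurd hcon (by simpa using hex m ham (by omega))
      push_neg at h1
      have := ih (by omega)
      linarith
    have := down k (by omega) (le_refl _)
    linarith


lemma tree_max {q : ℕ} [NeZero q] {β : ℝ} (hβ0 : 0 < β) (hβ1 : β < 1) (n : ℕ)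
    (u : TV q → ℝ)
    (hm : ∀ x ∈ S1 q n, -(n : ℤ) < x.k → x.k < (n : ℤ) →
      u x = (1 - β) * u (pred x) + (β / q) * ∑ c : ZMod q, u (child x c))
    (hb : ∀ x ∈ S1 q n, x.k = (n : ℤ) ∨ x.k = -(n : ℤ) → u x ≤ 0) :
    ∀ x ∈ S1 q n, u x ≤ 0 := by
  classical
  set slice : ℤ → Finset (TV q) :=
    fun j => (S1_finite q n).toFinset.filter (fun x => x.k = j) with hslice
  have hmem : ∀ (j : ℤ) (x : TV q), x ∈ slice j ↔ x ∈ S1 q n ∧ x.k = j := by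
    intro j x; simp [hslice, Set.Finite.mem_toFinset]
  set M : ℤ → ℝ := fun j => if h : (slice j).Nonempty then (slice j).sup' h u else 0 with hM
  have hub : ∀ x ∈ S1 q n, u x ≤ M x.k := by
    intro x hx
    have hxs : x ∈ slice x.k := (hmem _ _).2 ⟨hx, rfl⟩
    have hne : (slice x.k).Nonempty := ⟨x, hxs⟩
    rw [hM]
    simp only [dif_pos hne]
    exact Finset.le_sup' u hxs
  have hachieve : ∀ j : ℤ, -(n:ℤ) ≤ j → j ≤ n → ∃ x ∈ S1 q n, x.k = j ∧ M j = u x := by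
    intro j h1 h2
    have hne : (slice j).Nonempty := ⟨rootAt q j, (hmem _ _).2 ⟨rootAt_mem_S1 h1 h2, rfl⟩⟩
    obtain ⟨x, hxmem, hxe⟩ := Finset.exists_mem_eq_sup' hne u
    have hmx := (hmem _ _).1 hxmem
    refine ⟨x, hmx.1, hmx.2, ?_⟩
    rw [hM]
    simp only [dif_pos hne]
    exact hxe
  have hq0 : (0:ℝ) < q := by
    have := NeZero.ne q
    positivity
  have h1D : ∀ j : ℤ, -(n:ℤ) < j → j < n → M j ≤ β * M (j+1) + (1-β) * M (j-1) := by
    intro j hj1 hj2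
    obtain ⟨x, hx, hxk, hMx⟩ := hachieve j (by omega) (by omega)
    rw [hMx, hm x hx (by omega) (by omega)]
    have hc : ∀ c : ZMod q, u (child x c) ≤ M (j + 1) := by
      intro c
      have := hub (child x c) (child_mem_S1 hx (by omega) c)
      rwa [child_k, hxk] at this
    have hp : u (pred x) ≤ M (j - 1) := by
      have := hub (pred x) (pred_mem_S1 hx (by omega))
      rwa [pred_k, hxk] at this
    have hsum : ∑ c : ZMod q, u (child x c) ≤ (q : ℝ) * M (j + 1) := by
      calc ∑ c : ZMod q, u (child x c) ≤ ∑ _c : ZMod q, M (j + 1) :=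
            Finset.sum_le_sum (fun c _ => hc c)
        _ = (q : ℝ) * M (j + 1) := by
            rw [Finset.sum_const, Finset.card_univ, ZMod.card, nsmul_eq_mul]
    have h5 : (β / q) * ∑ c : ZMod q, u (child x c) ≤ β * M (j+1) := by
      have h6 := mul_le_mul_of_nonneg_left hsum (le_of_lt (div_pos hβ0 hq0))
      calc (β / q) * ∑ c : ZMod q, u (child x c)
          ≤ (β / q) * ((q:ℝ) * M (j + 1)) := h6
        _ = β * M (j+1) := by field_simp
    have h7 : (1 - β) * u (pred x) ≤ (1 - β) * M (j - 1) :=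
      mul_le_mul_of_nonneg_left hp (by linarith)
    linarith
  have hbdn : M (n:ℤ) ≤ 0 := by
    obtain ⟨x, hx, hxk, hMx⟩ := hachieve (n:ℤ) (by omega) (by omega)
    rw [hMx]; exact hb x hx (Or.inl hxk)
  have hbdm : M (-(n:ℤ)) ≤ 0 := by
    obtain ⟨x, hx, hxk, hMx⟩ := hachieve (-(n:ℤ)) (by omega) (by omega)
    rw [hMx]; exact hb x hx (Or.inr hxk)
  intro x hx
  calc u x ≤ M x.k := hub x hx
    _ ≤ 0 := oneD_max hβ0 hβ1 h1D hbdm hbdn x.k hx.1 hx.2.1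


lemma tree_dirichlet {q : ℕ} [NeZero q] {β : ℝ} (hβ0 : 0 < β) (hβ1 : β < 1) (n : ℕ)
    (g : TV q → ℝ) :
    ∃ A : TV q → ℝ,
      (∀ x ∈ S1 q n, -(n : ℤ) < x.k → x.k < (n : ℤ) →
        A x = (1 - β) * A (pred x) + (β / q) * ∑ c : ZMod q, A (child x c)) ∧
      (∀ x ∈ S1 q n, x.k = (n : ℤ) ∨ x.k = -(n : ℤ) → A x = g x) := by
  classical
  haveI : Fintype ↥(S1 q n) := (S1_finite q n).fintype
  set Pm : Matrix ↥(S1 q n) ↥(S1 q n) ℝ :=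
    fun x z => if -(n:ℤ) < x.val.k ∧ x.val.k < n then p1 q β ↑x ↑z else 0 with hPm
  set T : (↥(S1 q n) → ℝ) →ₗ[ℝ] (↥(S1 q n) → ℝ) := LinearMap.id - Pm.mulVecLin with hT
  have hTapp : ∀ (u : ↥(S1 q n) → ℝ) (x : ↥(S1 q n)),
      T u x = u x - ∑ z : ↥(S1 q n), Pm x z * u z := by
    intro u x
    rw [hT]
    simp [Matrix.mulVecLin_apply, Matrix.mulVec, dotProduct]
  have hrow : ∀ (u : ↥(S1 q n) → ℝ) (x : ↥(S1 q n)),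
      (-(n:ℤ) < x.val.k ∧ x.val.k < n) →
      ∑ z : ↥(S1 q n), Pm x z * u z
        = (1 - β) * (fun y => if hy : y ∈ S1 q n then u ⟨y, hy⟩ else 0) (pred x.val)
          + (β / q) * ∑ c : ZMod q,
              (fun y => if hy : y ∈ S1 q n then u ⟨y, hy⟩ else 0) (child x.val c) := by
    intro u x hx
    have h1 : ∀ z : ↥(S1 q n), Pm x z * u z
        = p1 q β x.val z.val * (fun y => if hy : y ∈ S1 q n then u ⟨y, hy⟩ else 0) z.val := by
      intro z
      rw [hPm]
      simp only [hx, and_self, if_true, dif_pos z.2]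
    rw [Finset.sum_congr rfl (fun z _ => h1 z)]
    exact sum_subtype_Ntree (S := S1 q n) β x.val
      (fun y => if hy : y ∈ S1 q n then u ⟨y, hy⟩ else 0) (fun z hz => dif_neg hz)
  have hrow0 : ∀ (u : ↥(S1 q n) → ℝ) (x : ↥(S1 q n)),
      ¬(-(n:ℤ) < x.val.k ∧ x.val.k < n) → ∑ z : ↥(S1 q n), Pm x z * u z = 0 := by
    intro u x hx
    rw [Finset.sum_eq_zero]
    intro z _
    rw [hPm]
    simp [hx]
  have hinj : Function.Injective T := by
    rw [injective_iff_map_eq_zero]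
    intro u hu
    have hux : ∀ x : ↥(S1 q n), u x = ∑ z : ↥(S1 q n), Pm x z * u z := by
      intro x
      have := congrFun hu x
      rw [hTapp] at this
      simp only [Pi.zero_apply] at this
      linarith
    set U : TV q → ℝ := fun y => if hy : y ∈ S1 q n then u ⟨y, hy⟩ else 0 with hU
    have hUm : ∀ x ∈ S1 q n, -(n:ℤ) < x.k → x.k < (n:ℤ) →
        U x = (1 - β) * U (pred x) + (β / q) * ∑ c : ZMod q, U (child x c) := by
      intro x hx h1 h2
      have := hux ⟨x, hx⟩
      rw [hrow u ⟨x, hx⟩ ⟨h1, h2⟩] at this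
      simpa [hU, dif_pos hx] using this
    have hUb : ∀ x ∈ S1 q n, x.k = (n:ℤ) ∨ x.k = -(n:ℤ) → U x = 0 := by
      intro x hx hxk
      have h0 := hux ⟨x, hx⟩
      rw [hrow0 u ⟨x, hx⟩ (show ¬(-(n:ℤ) < x.k ∧ x.k < (n:ℤ)) by omega)] at h0
      simpa [hU, dif_pos hx] using h0
    have hle := tree_max hβ0 hβ1 n U hUm (fun x hx hxk => le_of_eq (hUb x hx hxk))
    have hge := tree_max hβ0 hβ1 n (fun y => -U y)
      (fun x hx h1 h2 => by
        show -U x = (1 - β) * -U (pred x) + (β / q) * ∑ c : ZMod q, -U (child x c)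
        rw [hUm x hx h1 h2]
        rw [Finset.sum_neg_distrib]
        ring)
      (fun x hx hxk => by
        show -U x ≤ 0
        rw [hUb x hx hxk]; simp)
    funext x
    have h1 := hle x.val x.2
    have h2 := hge x.val x.2
    have h3 : U x.val = u x := by rw [hU]; simp [dif_pos x.2]
    simp only [Pi.zero_apply]
    rw [← h3]
    change -U x.val ≤ 0 at h2
    linarith
  have hsurj : Function.Surjective T := LinearMap.injective_iff_surjective.mp hinj
  obtain ⟨u, hu⟩ := hsurj
    (fun x => if -(n:ℤ) < x.val.k ∧ x.val.k < n then 0 else g ↑x)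
  refine ⟨fun y => if hy : y ∈ S1 q n then u ⟨y, hy⟩ else 0, ?_, ?_⟩
  · intro x hx h1 h2
    have := congrFun hu ⟨x, hx⟩
    rw [hTapp, hrow u ⟨x, hx⟩ ⟨h1, h2⟩] at this
    simp only [if_pos (⟨h1, h2⟩ : -(n:ℤ) < x.k ∧ x.k < (n:ℤ))] at this
    have h4 : u ⟨x, hx⟩ = (1 - β) * (fun y => if hy : y ∈ S1 q n then u ⟨y, hy⟩ else 0) (pred x)
        + (β / q) * ∑ c : ZMod q,
            (fun y => if hy : y ∈ S1 q n then u ⟨y, hy⟩ else 0) (child x c) := by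
      linarith
    simpa [dif_pos hx] using h4
  · intro x hx hxk
    have := congrFun hu ⟨x, hx⟩
    rw [hTapp, hrow0 u ⟨x, hx⟩ (show ¬(-(n:ℤ) < x.k ∧ x.k < (n:ℤ)) by omega)] at this
    simp only [if_neg (by omega : ¬(-(n:ℤ) < x.k ∧ x.k < (n:ℤ)))] at this
    simpa [dif_pos hx] using this



lemma Sdl_finite (q r n : ℕ) [NeZero q] [NeZero r] : (Sdl q r n).Finite := by
  haveI f1 : Finite ↥(S1 q n) := (S1_finite q n).to_subtype
  haveI f2 : Finite ↥(S1 r n) := (S1_finite r n).to_subtype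
  have hinj : Function.Injective (fun x : ↥(Sdl q r n) =>
      ((⟨x.val.val.1, x.2.1⟩, ⟨x.val.val.2, x.2.2⟩) : ↥(S1 q n) × ↥(S1 r n))) := by
    intro x y hxy
    obtain ⟨h1, h2⟩ := Prod.mk.injEq .. ▸ hxy
    exact Subtype.ext (DL.ext' (congrArg Subtype.val h1) (congrArg Subtype.val h2))
  haveI : Finite ↥(Sdl q r n) := Finite.of_injective _ hinj
  exact Set.toFinite _

lemma up_mem_Sdl {q r n : ℕ} {x : DL q r} (hx : x ∈ Sdl q r n) (hk : x.val.1.k < (n:ℤ))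
    (c : ZMod q) : up x c ∈ Sdl q r n := by
  refine ⟨child_mem_S1 hx.1 hk c, pred_mem_S1 hx.2 ?_⟩
  have := x.property; omega

lemma down_mem_Sdl {q r n : ℕ} {x : DL q r} (hx : x ∈ Sdl q r n)
    (hk : -(n:ℤ) < x.val.1.k) (d : ZMod r) : down x d ∈ Sdl q r n := by
  refine ⟨pred_mem_S1 hx.1 hk, child_mem_S1 hx.2 ?_ d⟩
  have := x.property; omega

lemma dl_max {q r : ℕ} [NeZero q] [NeZero r] {α : ℝ} (hα0 : 0 < α) (hα1 : α < 1) (n : ℕ)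
    (w : DL q r → ℝ)
    (hm : ∀ x ∈ Sdl q r n, -(n:ℤ) < x.val.1.k → x.val.1.k < (n:ℤ) →
      w x = (α / q) * ∑ c : ZMod q, w (up x c)
        + ((1 - α) / r) * ∑ d : ZMod r, w (down x d))
    (hb : ∀ x ∈ Sdl q r n, x.val.1.k = (n:ℤ) ∨ x.val.1.k = -(n:ℤ) → w x ≤ 0) :
    ∀ x ∈ Sdl q r n, w x ≤ 0 := by
  classical
  set slice : ℤ → Finset (DL q r) :=
    fun j => (Sdl_finite q r n).toFinset.filter (fun x => x.val.1.k = j) with hslice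
  have hmem : ∀ (j : ℤ) (x : DL q r), x ∈ slice j ↔ x ∈ Sdl q r n ∧ x.val.1.k = j := by
    intro j x; simp [hslice, Set.Finite.mem_toFinset]
  set M : ℤ → ℝ := fun j => if h : (slice j).Nonempty then (slice j).sup' h w else 0 with hM
  have hub : ∀ x ∈ Sdl q r n, w x ≤ M x.val.1.k := by
    intro x hx
    have hxs : x ∈ slice x.val.1.k := (hmem _ _).2 ⟨hx, rfl⟩
    have hne : (slice x.val.1.k).Nonempty := ⟨x, hxs⟩
    rw [hM]
    simp only [dif_pos hne]
    exact Finset.le_sup' w hxs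
  have hachieve : ∀ j : ℤ, -(n:ℤ) ≤ j → j ≤ n →
      ∃ x ∈ Sdl q r n, x.val.1.k = j ∧ M j = w x := by
    intro j h1 h2
    have hroot : (⟨(rootAt q j, rootAt r (-j)), by simp⟩ : DL q r) ∈ Sdl q r n :=
      ⟨rootAt_mem_S1 h1 h2, rootAt_mem_S1 (by omega) (by omega)⟩
    have hne : (slice j).Nonempty := ⟨_, (hmem _ _).2 ⟨hroot, rfl⟩⟩
    obtain ⟨x, hxmem, hxe⟩ := Finset.exists_mem_eq_sup' hne w
    have hmx := (hmem _ _).1 hxmem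
    refine ⟨x, hmx.1, hmx.2, ?_⟩
    rw [hM]
    simp only [dif_pos hne]
    exact hxe
  have hq0 : (0:ℝ) < q := by have := NeZero.ne q; positivity
  have hr0 : (0:ℝ) < r := by have := NeZero.ne r; positivity
  have h1D : ∀ j : ℤ, -(n:ℤ) < j → j < n → M j ≤ α * M (j+1) + (1-α) * M (j-1) := by
    intro j hj1 hj2
    obtain ⟨x, hx, hxk, hMx⟩ := hachieve j (by omega) (by omega)
    rw [hMx, hm x hx (by omega) (by omega)]
    have hc : ∀ c : ZMod q, w (up x c) ≤ M (j + 1) := by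
      intro c
      have := hub (up x c) (up_mem_Sdl hx (by omega) c)
      have hk : (up x c).val.1.k = j + 1 := by simp [up, hxk]
      rwa [hk] at this
    have hd : ∀ d : ZMod r, w (down x d) ≤ M (j - 1) := by
      intro d
      have := hub (down x d) (down_mem_Sdl hx (by omega) d)
      have hk : (down x d).val.1.k = j - 1 := by simp [down, hxk]
      rwa [hk] at this
    have hsum1 : ∑ c : ZMod q, w (up x c) ≤ (q : ℝ) * M (j + 1) := by
      calc ∑ c : ZMod q, w (up x c) ≤ ∑ _c : ZMod q, M (j + 1) :=
            Finset.sum_le_sum (fun c _ => hc c)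
        _ = (q : ℝ) * M (j + 1) := by
            rw [Finset.sum_const, Finset.card_univ, ZMod.card, nsmul_eq_mul]
    have hsum2 : ∑ d : ZMod r, w (down x d) ≤ (r : ℝ) * M (j - 1) := by
      calc ∑ d : ZMod r, w (down x d) ≤ ∑ _d : ZMod r, M (j - 1) :=
            Finset.sum_le_sum (fun d _ => hd d)
        _ = (r : ℝ) * M (j - 1) := by
            rw [Finset.sum_const, Finset.card_univ, ZMod.card, nsmul_eq_mul]
    have h5 : (α / q) * ∑ c : ZMod q, w (up x c) ≤ α * M (j+1) := by
      have h6 := mul_le_mul_of_nonneg_left hsum1 (le_of_lt (div_pos hα0 hq0))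
      calc (α / q) * ∑ c : ZMod q, w (up x c) ≤ (α / q) * ((q:ℝ) * M (j + 1)) := h6
        _ = α * M (j+1) := by field_simp
    have h7 : ((1 - α) / r) * ∑ d : ZMod r, w (down x d) ≤ (1 - α) * M (j-1) := by
      have h8 := mul_le_mul_of_nonneg_left hsum2
        (le_of_lt (div_pos (show (0:ℝ) < 1 - α by linarith) hr0))
      calc ((1 - α) / r) * ∑ d : ZMod r, w (down x d)
          ≤ ((1 - α) / r) * ((r:ℝ) * M (j - 1)) := h8
        _ = (1 - α) * M (j-1) := by field_simp
    linarith
  have hbdn : M (n:ℤ) ≤ 0 := by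
    obtain ⟨x, hx, hxk, hMx⟩ := hachieve (n:ℤ) (by omega) (by omega)
    rw [hMx]; exact hb x hx (Or.inl hxk)
  have hbdm : M (-(n:ℤ)) ≤ 0 := by
    obtain ⟨x, hx, hxk, hMx⟩ := hachieve (-(n:ℤ)) (by omega) (by omega)
    rw [hMx]; exact hb x hx (Or.inr hxk)
  intro x hx
  have hk1 : -(n:ℤ) ≤ x.val.1.k := hx.1.1
  have hk2 : x.val.1.k ≤ (n:ℤ) := hx.1.2.1
  calc w x ≤ M x.val.1.k := hub x hx
    _ ≤ 0 := oneD_max hα0 hα1 h1D hbdm hbdn x.val.1.k hk1 hk2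


@[simp] lemma up_val1 {q r : ℕ} (x : DL q r) (c : ZMod q) :
    (up x c).val.1 = child x.val.1 c := rfl
@[simp] lemma up_val2 {q r : ℕ} (x : DL q r) (c : ZMod q) :
    (up x c).val.2 = pred x.val.2 := rfl
@[simp] lemma down_val1 {q r : ℕ} (x : DL q r) (d : ZMod r) :
    (down x d).val.1 = pred x.val.1 := rfl
@[simp] lemma down_val2 {q r : ℕ} (x : DL q r) (d : ZMod r) :
    (down x d).val.2 = child x.val.2 d := rfl

lemma strip_split {q r : ℕ} [NeZero q] [NeZero r] {α : ℝ} (hα0 : 0 < α) (hα1 : α < 1)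
    {h : DL q r → ℝ} (hharm : IsHarmonic (pDL q r α) h) (n : ℕ) (hn : 1 ≤ n) :
    ∃ (A : TV q → ℝ) (B : TV r → ℝ),
      ∀ x ∈ Sdl q r n, h x = A x.val.1 + B x.val.2 := by
  classical
  have hq0 : (q:ℝ) ≠ 0 := Nat.cast_ne_zero.mpr (NeZero.ne q)
  have hr0 : (r:ℝ) ≠ 0 := Nat.cast_ne_zero.mpr (NeZero.ne r)
  obtain ⟨A, hAm, hAb⟩ := tree_dirichlet hα0 hα1 n
    (fun y => if hy : y.k = (n:ℤ) then h ⟨(y, rootAt r (-(n:ℤ))), by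
      rw [rootAt_k, hy]; ring⟩ else 0)
  obtain ⟨B, hBm, hBb⟩ := tree_dirichlet (show (0:ℝ) < 1 - α by linarith)
    (by linarith) n
    (fun y => if hy : y.k = (n:ℤ) then h ⟨(rootAt q (-(n:ℤ)), y), by
      rw [rootAt_k, hy]; ring⟩ else 0)
  set w : DL q r → ℝ := fun x => h x - A x.val.1 - B x.val.2 with hw
  have hwm : ∀ x ∈ Sdl q r n, -(n:ℤ) < x.val.1.k → x.val.1.k < (n:ℤ) →
      w x = (α/q) * ∑ c : ZMod q, w (up x c)
        + ((1-α)/r) * ∑ d : ZMod r, w (down x d) := by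
    intro x hx h1 h2
    have hA := hAm x.val.1 hx.1 h1 h2
    have hB := hBm x.val.2 hx.2 (by have := x.property; omega) (by have := x.property; omega)
    have hh := harm_sum hharm x
    have e1 : ∑ c : ZMod q, w (up x c)
        = ∑ c : ZMod q, h (up x c) - ∑ c : ZMod q, A (child x.val.1 c)
          - (q:ℝ) * B (pred x.val.2) := by
      rw [hw]
      simp only [up_val1, up_val2]
      rw [Finset.sum_sub_distrib, Finset.sum_sub_distrib, Finset.sum_const,
        Finset.card_univ, ZMod.card, nsmul_eq_mul]
    have e2 : ∑ d : ZMod r, w (down x d)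
        = ∑ d : ZMod r, h (down x d) - (r:ℝ) * A (pred x.val.1)
          - ∑ d : ZMod r, B (child x.val.2 d) := by
      rw [hw]
      simp only [down_val1, down_val2]
      rw [Finset.sum_sub_distrib, Finset.sum_sub_distrib, Finset.sum_const,
        Finset.card_univ, ZMod.card, nsmul_eq_mul]
    rw [hw]
    simp only
    rw [e1, e2, ← hh, hA, hB]
    field_simp
    ring
  have hwb : ∀ x ∈ Sdl q r n, x.val.1.k = (n:ℤ) ∨ x.val.1.k = -(n:ℤ) → w x = 0 := by
    intro x hx hxk
    rcases hxk with hk | hk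
    · have hx2 : x.val.2 = rootAt r (-(n:ℤ)) :=
        eq_root_of_mem_S1 hx.2 (by have := x.property; omega)
      have hA := hAb x.val.1 hx.1 (Or.inl hk)
      rw [dif_pos hk] at hA
      have hB := hBb x.val.2 hx.2 (Or.inr (by have := x.property; omega))
      rw [dif_neg (by have := x.property; omega : ¬ x.val.2.k = (n:ℤ))] at hB
      have hxe : (⟨(x.val.1, rootAt r (-(n:ℤ))), by rw [rootAt_k, hk]; ring⟩ : DL q r) = x :=
        DL.ext' rfl hx2.symm
      rw [hw]
      simp only
      rw [hA, hB, hxe]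
      ring
    · have hx1 : x.val.1 = rootAt q (-(n:ℤ)) := eq_root_of_mem_S1 hx.1 hk
      have hA := hAb x.val.1 hx.1 (Or.inr hk)
      rw [dif_neg (by omega : ¬ x.val.1.k = (n:ℤ))] at hA
      have hB := hBb x.val.2 hx.2 (Or.inl (by have := x.property; omega))
      rw [dif_pos (by have := x.property; omega : x.val.2.k = (n:ℤ))] at hB
      have hxe : (⟨(rootAt q (-(n:ℤ)), x.val.2), by
          have := x.property; show -(n:ℤ) + x.val.2.k = 0; omega⟩ : DL q r) = x :=
        DL.ext' hx1.symm rfl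
      rw [hw]
      simp only
      rw [hA, hB, hxe]
      ring
  have hle := dl_max hα0 hα1 n w hwm (fun x hx hxk => le_of_eq (hwb x hx hxk))
  have hge := dl_max hα0 hα1 n (fun y => -w y)
    (fun x hx h1 h2 => by
      show -w x = (α/q) * ∑ c : ZMod q, -w (up x c)
        + ((1-α)/r) * ∑ d : ZMod r, -w (down x d)
      rw [hwm x hx h1 h2, Finset.sum_neg_distrib, Finset.sum_neg_distrib]
      ring)
    (fun x hx hxk => by
      show -w x ≤ 0
      rw [hwb x hx hxk]; simp)
  refine ⟨A, B, fun x hx => ?_⟩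
  have h1 := hle x hx
  have h2 := hge x hx
  change -w x ≤ 0 at h2
  have : w x = 0 := by linarith
  rw [hw] at this
  simp only at this
  linarith

lemma supp_bound {q : ℕ} (x : TV q) : ∃ N : ℕ, ∀ i : ℤ, i ≤ -(N:ℤ) → x.σ i = 0 := by
  obtain ⟨lb, hlb⟩ := x.fin.bddBelow
  refine ⟨(1 - lb).toNat, fun i hi => ?_⟩
  by_contra hne
  have h1 : i ∈ Function.support x.σ := hne
  have h2 := hlb h1
  have h3 : (1 - lb : ℤ) ≤ ((1 - lb).toNat : ℤ) := Int.self_le_toNat _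
  omega

lemma rect {q r : ℕ} [NeZero q] [NeZero r] {α : ℝ} (hα0 : 0 < α) (hα1 : α < 1)
    {h : DL q r → ℝ} (hharm : IsHarmonic (pDL q r α) h) (p p' pa pb : DL q r)
    (hk : p.val.1.k = p'.val.1.k)
    (hpa1 : pa.val.1 = p.val.1) (hpa2 : pa.val.2 = p'.val.2)
    (hpb1 : pb.val.1 = p'.val.1) (hpb2 : pb.val.2 = p.val.2) :
    h p + h p' = h pa + h pb := by
  obtain ⟨N1, hN1⟩ := supp_bound p.val.1
  obtain ⟨N2, hN2⟩ := supp_bound p'.val.1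
  obtain ⟨N3, hN3⟩ := supp_bound p.val.2
  obtain ⟨N4, hN4⟩ := supp_bound p'.val.2
  set k := p.val.1.k with hkdef
  set n : ℕ := N1 + N2 + N3 + N4 + k.natAbs + 1 with hn
  have hkn : k.natAbs ≤ n := by omega
  have hk2 : p.val.2.k = -k := by have := p.property; omega
  have hk2' : p'.val.2.k = -k := by have := p'.property; omega
  have hm1 : p.val.1 ∈ S1 q n :=
    mem_S1_of (by omega) (by omega) (fun i hi => hN1 i (by omega))
  have hm1' : p'.val.1 ∈ S1 q n :=
    mem_S1_of (by omega) (by omega) (fun i hi => hN2 i (by omega))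
  have hm2 : p.val.2 ∈ S1 r n :=
    mem_S1_of (by omega) (by omega) (fun i hi => hN3 i (by omega))
  have hm2' : p'.val.2 ∈ S1 r n :=
    mem_S1_of (by omega) (by omega) (fun i hi => hN4 i (by omega))
  obtain ⟨A, B, hsplit⟩ := strip_split hα0 hα1 hharm n (by omega)
  rw [hsplit p ⟨hm1, hm2⟩, hsplit p' ⟨hm1', hm2'⟩,
    hsplit pa ⟨hpa1 ▸ hm1, hpa2 ▸ hm2'⟩, hsplit pb ⟨hpb1 ▸ hm1', hpb2 ▸ hm2⟩,
    hpa1, hpa2, hpb1, hpb2]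
  ring



/-- decomposition of nonnegative `P_α`-harmonic functions on `DL(q,r)`. -/
theorem split_theorem (q r : ℕ) (hq : 2 ≤ q) (hr : 2 ≤ r) (α : ℝ) (hα0 : 0 < α)
    (hα1 : α < 1) (h : DL q r → ℝ) (hpos : ∀ x, 0 ≤ h x)
    (hharm : IsHarmonic (pDL q r α) h) :
    ∃ (h₁ : TV q → ℝ) (h₂ : TV r → ℝ),
      (∀ x₁, 0 ≤ h₁ x₁) ∧ (∀ x₂, 0 ≤ h₂ x₂) ∧
      IsHarmonic (p1 q α) h₁ ∧ IsHarmonic (p2 r α) h₂ ∧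
      ∀ x : DL q r, h x = h₁ x.val.1 + h₂ x.val.2 := by
  haveI : NeZero q := ⟨by omega⟩
  haveI : NeZero r := ⟨by omega⟩
  have hq0 : (q:ℝ) ≠ 0 := Nat.cast_ne_zero.mpr (by omega)
  have hr0 : (r:ℝ) ≠ 0 := Nat.cast_ne_zero.mpr (by omega)
  have hqpos : (0:ℝ) < q := by positivity
  have hrpos : (0:ℝ) < r := by positivity
  classical
  set S : TV q → Set ℝ := fun x₁ => {y | ∃ p : DL q r, p.val.1 = x₁ ∧ h p = y} with hS
  have hSne : ∀ x₁, (S x₁).Nonempty := fun x₁ =>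
    ⟨h ⟨(x₁, rootAt r (-x₁.k)), show x₁.k + -x₁.k = 0 by ring⟩, ⟨_, rfl, rfl⟩⟩
  have hSbd : ∀ x₁, BddBelow (S x₁) := fun x₁ =>
    ⟨0, fun y ⟨p, _, hy⟩ => hy ▸ hpos p⟩
  set h1 : TV q → ℝ := fun x₁ => sInf (S x₁) with hh1
  have h1_le : ∀ p : DL q r, h1 p.val.1 ≤ h p := fun p =>
    csInf_le (hSbd _) ⟨p, rfl, rfl⟩
  have h1_nonneg : ∀ x₁, 0 ≤ h1 x₁ := fun x₁ =>
    le_csInf (hSne x₁) (fun y ⟨p, _, hy⟩ => hy ▸ hpos p)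
  set h2 : TV r → ℝ := fun x₂ =>
    h ⟨(rootAt q (-x₂.k), x₂), show -x₂.k + x₂.k = 0 by ring⟩
      - h1 (rootAt q (-x₂.k)) with hh2
  have h2_nonneg : ∀ x₂, 0 ≤ h2 x₂ := by
    intro x₂
    rw [hh2]
    simp only
    have := h1_le ⟨(rootAt q (-x₂.k), x₂), show -x₂.k + x₂.k = 0 by ring⟩
    exact sub_nonneg.mpr this
  -- splitting
  have split : ∀ p : DL q r, h p = h1 p.val.1 + h2 p.val.2 := by
    intro p
    have hrpprop : p.val.1.k + p.val.2.k = 0 := p.property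
    set rp : DL q r := ⟨(rootAt q p.val.1.k, p.val.2), by
      show p.val.1.k + p.val.2.k = 0; exact p.property⟩ with hrpd
    have hstep : ∀ p' pb : DL q r, p'.val.1 = p.val.1 → pb.val.1 = rootAt q p.val.1.k →
        pb.val.2 = p'.val.2 → h p' = h pb + (h p - h rp) := by
      intro p' pb h1' h2' h3'
      have hkk : p'.val.1.k = rp.val.1.k := by rw [h1']; rfl
      have := rect hα0 hα1 hharm p' rp p pb hkk h1'.symm rfl h2' h3'
      linarith
    have hge : h1 (rootAt q p.val.1.k) + (h p - h rp) ≤ h1 p.val.1 := by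
      apply le_csInf (hSne _)
      rintro y ⟨p', hp'1, rfl⟩
      have hkp : p'.val.1.k = p.val.1.k := by rw [hp'1]
      set pb : DL q r := ⟨(rootAt q p.val.1.k, p'.val.2), by
        show p.val.1.k + p'.val.2.k = 0
        have := p'.property; omega⟩ with hpbd
      have hb := hstep p' pb hp'1 rfl rfl
      have h7 : h1 (rootAt q p.val.1.k) ≤ h pb := h1_le pb
      linarith
    have hle : h1 p.val.1 ≤ h1 (rootAt q p.val.1.k) + (h p - h rp) := by
      have hlow : h1 p.val.1 - (h p - h rp) ≤ h1 (rootAt q p.val.1.k) := by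
        apply le_csInf (hSne _)
        rintro y ⟨p'', hp''1, rfl⟩
        have hkp : p''.val.1.k = p.val.1.k := by rw [hp''1]; rfl
        set pc : DL q r := ⟨(p.val.1, p''.val.2), by
          show p.val.1.k + p''.val.2.k = 0
          have := p''.property; omega⟩ with hpcd
        have hb := hstep pc p'' rfl hp''1 rfl
        have h7 : h1 p.val.1 ≤ h pc := h1_le pc
        linarith
      linarith
    have hmk : -p.val.2.k = p.val.1.k := by have := p.property; omega
    have hh2v : h2 p.val.2 = h rp - h1 (rootAt q p.val.1.k) := by
      have e4 : h (⟨(rootAt q (-p.val.2.k), p.val.2),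
          show -p.val.2.k + p.val.2.k = 0 by ring⟩ : DL q r) = h rp := by
        apply congrArg h
        apply DL.ext'
        · show rootAt q (-p.val.2.k) = rootAt q p.val.1.k
          rw [hmk]
        · rfl
      rw [hh2]
      simp only
      rw [e4, hmk]
    rw [hh2v]
    linarith
  -- one-step averages
  set P1 : TV q → ℝ := fun x₁ =>
    (1 - α) * h1 (pred x₁) + (α/q) * ∑ c : ZMod q, h1 (child x₁ c) with hP1
  set Q2 : TV r → ℝ := fun x₂ =>
    α * h2 (pred x₂) + ((1-α)/r) * ∑ d : ZMod r, h2 (child x₂ d) with hQ2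
  have ident : ∀ p : DL q r, P1 p.val.1 + Q2 p.val.2 = h1 p.val.1 + h2 p.val.2 := by
    intro p
    have hh := harm_sum hharm p
    have e1 : ∑ c : ZMod q, h (up p c)
        = ∑ c : ZMod q, h1 (child p.val.1 c) + (q:ℝ) * h2 (pred p.val.2) := by
      have : ∀ c : ZMod q, h (up p c) = h1 (child p.val.1 c) + h2 (pred p.val.2) :=
        fun c => split (up p c)
      rw [Finset.sum_congr rfl (fun c _ => this c), Finset.sum_add_distrib,
        Finset.sum_const, Finset.card_univ, ZMod.card, nsmul_eq_mul]
    have e2 : ∑ d : ZMod r, h (down p d)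
        = (r:ℝ) * h1 (pred p.val.1) + ∑ d : ZMod r, h2 (child p.val.2 d) := by
      have : ∀ d : ZMod r, h (down p d) = h1 (pred p.val.1) + h2 (child p.val.2 d) :=
        fun d => split (down p d)
      rw [Finset.sum_congr rfl (fun d _ => this d), Finset.sum_add_distrib,
        Finset.sum_const, Finset.card_univ, ZMod.card, nsmul_eq_mul]
    rw [e1, e2, split p] at hh
    rw [hP1, hQ2]
    simp only
    rw [← hh]
    field_simp
    ring
  have superharm : ∀ x₁, P1 x₁ ≤ h1 x₁ := by
    intro x₁
    apply le_csInf (hSne _)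
    rintro y ⟨p', hp'1, rfl⟩
    rw [← hp'1]
    have hh := harm_sum hharm p'
    have e1 : ∑ c : ZMod q, h1 (child p'.val.1 c) ≤ ∑ c : ZMod q, h (up p' c) :=
      Finset.sum_le_sum (fun c _ => h1_le (up p' c))
    have e2 : (r:ℝ) * h1 (pred p'.val.1) ≤ ∑ d : ZMod r, h (down p' d) := by
      calc (r:ℝ) * h1 (pred p'.val.1) = ∑ _d : ZMod r, h1 (pred p'.val.1) := by
            rw [Finset.sum_const, Finset.card_univ, ZMod.card, nsmul_eq_mul]
        _ ≤ ∑ d : ZMod r, h (down p' d) :=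
            Finset.sum_le_sum (fun d _ => h1_le (down p' d))
    rw [hP1]
    simp only
    have c1 : (α/q) * ∑ c : ZMod q, h1 (child p'.val.1 c)
        ≤ (α/q) * ∑ c : ZMod q, h (up p' c) :=
      mul_le_mul_of_nonneg_left e1 (by positivity)
    have c2 : ((1-α)/r) * ((r:ℝ) * h1 (pred p'.val.1))
        ≤ ((1-α)/r) * ∑ d : ZMod r, h (down p' d) :=
      mul_le_mul_of_nonneg_left e2 (by
        have : (0:ℝ) < 1 - α := by linarith
        positivity)
    have c3 : ((1-α)/r) * ((r:ℝ) * h1 (pred p'.val.1)) = (1-α) * h1 (pred p'.val.1) := by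
      field_simp
    linarith
  set cc : ℤ → ℝ := fun k => P1 (rootAt q k) - h1 (rootAt q k) with hcc
  have cc_nonpos : ∀ k, cc k ≤ 0 := by
    intro k
    rw [hcc]
    simp only
    have := superharm (rootAt q k)
    linarith
  have defect1 : ∀ x₁ : TV q, P1 x₁ - h1 x₁ = cc x₁.k := by
    intro x₁
    have e1 : P1 x₁ + Q2 (rootAt r (-x₁.k)) = h1 x₁ + h2 (rootAt r (-x₁.k)) :=
      ident ⟨(x₁, rootAt r (-x₁.k)), show x₁.k + -x₁.k = 0 by ring⟩
    have e2 : P1 (rootAt q x₁.k) + Q2 (rootAt r (-x₁.k))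
        = h1 (rootAt q x₁.k) + h2 (rootAt r (-x₁.k)) :=
      ident ⟨(rootAt q x₁.k, rootAt r (-x₁.k)), show x₁.k + -x₁.k = 0 by ring⟩
    rw [hcc]
    simp only
    linarith
  have defect2 : ∀ x₂ : TV r, Q2 x₂ - h2 x₂ = -(cc (-x₂.k)) := by
    intro x₂
    have e1 : P1 (rootAt q (-x₂.k)) + Q2 x₂ = h1 (rootAt q (-x₂.k)) + h2 x₂ :=
      ident ⟨(rootAt q (-x₂.k), x₂), show -x₂.k + x₂.k = 0 by ring⟩
    rw [hcc]
    simp only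
    linarith
  -- level infimum of h1
  set M : ℤ → Set ℝ := fun k => {y | ∃ x₁ : TV q, x₁.k = k ∧ h1 x₁ = y} with hMs
  have hMne : ∀ k, (M k).Nonempty := fun k => ⟨h1 (rootAt q k), ⟨rootAt q k, rfl, rfl⟩⟩
  have hMbd : ∀ k, BddBelow (M k) := fun k =>
    ⟨0, fun y ⟨x₁, _, hy⟩ => hy ▸ h1_nonneg x₁⟩
  set m1 : ℤ → ℝ := fun k => sInf (M k) with hm1
  have m1_nonneg : ∀ k, 0 ≤ m1 k := fun k =>
    le_csInf (hMne k) (fun y ⟨x₁, _, hy⟩ => hy ▸ h1_nonneg x₁)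
  have m1_le : ∀ x₁ : TV q, m1 x₁.k ≤ h1 x₁ := fun x₁ =>
    csInf_le (hMbd _) ⟨x₁, rfl, rfl⟩
  have m1_super : ∀ k, α * m1 (k+1) + (1-α) * m1 (k-1) ≤ m1 k + cc k := by
    intro k
    have key : ∀ y ∈ M k, α * m1 (k+1) + (1-α) * m1 (k-1) - cc k ≤ y := by
      rintro y ⟨x₁, hxk, rfl⟩
      have hP : P1 x₁ = h1 x₁ + cc x₁.k := by have := defect1 x₁; linarith
      have e2 : ∀ c : ZMod q, m1 (k+1) ≤ h1 (child x₁ c) := by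
        intro c
        have := m1_le (child x₁ c)
        rwa [child_k, hxk] at this
      have e3 : m1 (k-1) ≤ h1 (pred x₁) := by
        have := m1_le (pred x₁)
        rwa [pred_k, hxk] at this
      have e4 : (q:ℝ) * m1 (k+1) ≤ ∑ c : ZMod q, h1 (child x₁ c) := by
        calc (q:ℝ) * m1 (k+1) = ∑ _c : ZMod q, m1 (k+1) := by
              rw [Finset.sum_const, Finset.card_univ, ZMod.card, nsmul_eq_mul]
          _ ≤ ∑ c : ZMod q, h1 (child x₁ c) := Finset.sum_le_sum (fun c _ => e2 c)
      have e5 : (α/q) * ((q:ℝ) * m1 (k+1)) ≤ (α/q) * ∑ c : ZMod q, h1 (child x₁ c) :=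
        mul_le_mul_of_nonneg_left e4 (by positivity)
      have e6 : (α/q) * ((q:ℝ) * m1 (k+1)) = α * m1 (k+1) := by field_simp
      have e7 : (1-α) * m1 (k-1) ≤ (1-α) * h1 (pred x₁) :=
        mul_le_mul_of_nonneg_left e3 (by linarith)
      have e8 : α * m1 (k + 1) ≤ α / ↑q * ∑ c : ZMod q, h1 (child x₁ c) := by
        rw [← e6]; exact e5
      rw [hP1] at hP
      simp only at hP
      rw [hxk] at hP
      have step1 : α * m1 (k + 1) + (1 - α) * m1 (k - 1) - cc k
          ≤ α / ↑q * (∑ c : ZMod q, h1 (child x₁ c)) + (1 - α) * h1 (pred x₁) - cc k :=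
        sub_le_sub_right (add_le_add e8 e7) _
      have step2 : α / ↑q * (∑ c : ZMod q, h1 (child x₁ c)) + (1 - α) * h1 (pred x₁) - cc k
          = h1 x₁ := by linear_combination hP
      exact le_of_le_of_eq step1 step2
    have h9 : m1 k = sInf (M k) := rfl
    have := le_csInf (hMne k) key
    rw [← h9] at this
    linarith
  -- the reduite
  set F : Set (ℤ → ℝ) := {u | (∀ k, 0 ≤ u k) ∧
    ∀ k, α * u (k+1) + (1-α) * u (k-1) ≤ u k + cc k} with hF
  have hm1F : m1 ∈ F := ⟨m1_nonneg, m1_super⟩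
  set ψ : ℤ → ℝ := fun k => sInf {y | ∃ u ∈ F, u k = y} with hψ
  have hψne : ∀ k : ℤ, {y | ∃ u ∈ F, u k = y}.Nonempty := fun k => ⟨m1 k, m1, hm1F, rfl⟩
  have hψbd : ∀ k : ℤ, BddBelow {y | ∃ u ∈ F, u k = y} := fun k =>
    ⟨0, fun y ⟨u, hu, hy⟩ => hy ▸ hu.1 k⟩
  have ψ_nonneg : ∀ k, 0 ≤ ψ k := fun k =>
    le_csInf (hψne k) (fun y ⟨u, hu, hy⟩ => hy ▸ hu.1 k)
  have ψ_le : ∀ u ∈ F, ∀ k, ψ k ≤ u k := fun u hu k =>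
    csInf_le (hψbd k) ⟨u, hu, rfl⟩
  have ψ_le_m1 : ∀ k, ψ k ≤ m1 k := ψ_le m1 hm1F
  have ψ_super : ∀ k, α * ψ (k+1) + (1-α) * ψ (k-1) ≤ ψ k + cc k := by
    intro k
    have key : ∀ y ∈ {y | ∃ u ∈ F, u k = y}, α * ψ (k+1) + (1-α) * ψ (k-1) - cc k ≤ y := by
      rintro y ⟨u, hu, rfl⟩
      have e1 : α * ψ (k+1) ≤ α * u (k+1) :=
        mul_le_mul_of_nonneg_left (ψ_le u hu (k+1)) (le_of_lt hα0)
      have e2 : (1-α) * ψ (k-1) ≤ (1-α) * u (k-1) :=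
        mul_le_mul_of_nonneg_left (ψ_le u hu (k-1)) (by linarith)
      have := hu.2 k
      linarith
    have h9 : ψ k = sInf {y | ∃ u ∈ F, u k = y} := rfl
    have := le_csInf (hψne k) key
    rw [← h9] at this
    linarith
  have ψ_eq : ∀ k, α * ψ (k+1) + (1-α) * ψ (k-1) = ψ k + cc k := by
    intro k0
    set v : ℤ → ℝ := Function.update ψ k0 (α * ψ (k0+1) + (1-α) * ψ (k0-1) - cc k0)
      with hv
    have hvle : ∀ k, v k ≤ ψ k := by
      intro k
      by_cases hk : k = k0
      · subst hk
        rw [hv, Function.update_self]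
        have := ψ_super k
        linarith
      · rw [hv, Function.update_of_ne hk]
    have hvF : v ∈ F := by
      constructor
      · intro k
        by_cases hk : k = k0
        · subst hk
          rw [hv, Function.update_self]
          have n1 := ψ_nonneg (k+1)
          have n2 := ψ_nonneg (k-1)
          have n3 := cc_nonpos k
          nlinarith
        · rw [hv, Function.update_of_ne hk]
          exact ψ_nonneg k
      · intro k
        have e1 : α * v (k+1) ≤ α * ψ (k+1) :=
          mul_le_mul_of_nonneg_left (hvle (k+1)) (le_of_lt hα0)
        have e2 : (1-α) * v (k-1) ≤ (1-α) * ψ (k-1) :=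
          mul_le_mul_of_nonneg_left (hvle (k-1)) (by linarith)
        by_cases hk : k = k0
        · subst hk
          rw [hv, Function.update_self]
          linarith
        · rw [hv, Function.update_of_ne hk]
          have := ψ_super k
          linarith
    have := ψ_le v hvF k0
    rw [hv, Function.update_self] at this
    have := ψ_super k0
    linarith
  -- final functions
  refine ⟨fun x₁ => h1 x₁ - ψ x₁.k, fun x₂ => h2 x₂ + ψ (-x₂.k), ?_, ?_, ?_, ?_, ?_⟩
  · intro x₁
    have := ψ_le_m1 x₁.k
    have := m1_le x₁
    simp only
    linarith
  · intro x₂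
    have := ψ_nonneg (-x₂.k)
    have := h2_nonneg x₂
    simp only
    linarith
  · intro x₁
    rw [p1_tsum α x₁ (fun y => h1 y - ψ y.k)]
    simp only [child_k, pred_k]
    have e1 : ∑ c : ZMod q, (h1 (child x₁ c) - ψ (x₁.k + 1))
        = ∑ c : ZMod q, h1 (child x₁ c) - (q:ℝ) * ψ (x₁.k + 1) := by
      rw [Finset.sum_sub_distrib, Finset.sum_const, Finset.card_univ, ZMod.card,
        nsmul_eq_mul]
    rw [e1]
    have onq : (α/(q:ℝ)) * ((∑ c : ZMod q, h1 (child x₁ c)) - (q:ℝ) * ψ (x₁.k + 1))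
        = (α/(q:ℝ)) * (∑ c : ZMod q, h1 (child x₁ c)) - α * ψ (x₁.k + 1) := by
      field_simp
    rw [onq, mul_sub]
    have hP : (1-α) * h1 (pred x₁) + (α/(q:ℝ)) * ∑ c : ZMod q, h1 (child x₁ c)
        = h1 x₁ + cc x₁.k := by
      have := defect1 x₁
      rw [hP1] at this
      simp only at this
      linarith
    have hrec := ψ_eq x₁.k
    linear_combination hP - hrec
  · intro x₂
    have htt : ∀ y, p2 r α x₂ y * (h2 y + ψ (-y.k)) = p1 r (1-α) x₂ y * (h2 y + ψ (-y.k)) :=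
      fun y => by rw [p2_eq_p1]
    rw [tsum_congr htt, p1_tsum (1-α) x₂ (fun y => h2 y + ψ (-y.k))]
    simp only [child_k, pred_k]
    have e1 : ∑ d : ZMod r, (h2 (child x₂ d) + ψ (-(x₂.k + 1)))
        = ∑ d : ZMod r, h2 (child x₂ d) + (r:ℝ) * ψ (-(x₂.k + 1)) := by
      rw [Finset.sum_add_distrib, Finset.sum_const, Finset.card_univ, ZMod.card,
        nsmul_eq_mul]
    rw [e1]
    rw [show -(x₂.k - 1) = -x₂.k + 1 by ring, show -(x₂.k + 1) = -x₂.k - 1 by ring]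
    have onr : ((1-α)/(r:ℝ)) * ((∑ d : ZMod r, h2 (child x₂ d)) + (r:ℝ) * ψ (-x₂.k - 1))
        = ((1-α)/(r:ℝ)) * (∑ d : ZMod r, h2 (child x₂ d)) + (1-α) * ψ (-x₂.k - 1) := by
      field_simp
    rw [onr]
    have hQ : α * h2 (pred x₂) + ((1-α)/(r:ℝ)) * ∑ d : ZMod r, h2 (child x₂ d)
        = h2 x₂ - cc (-x₂.k) := by
      have := defect2 x₂
      rw [hQ2] at this
      simp only at this
      linarith
    have hrec := ψ_eq (-x₂.k)
    linear_combination hQ + hrec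
  · intro p
    have := split p
    have hmk : -p.val.2.k = p.val.1.k := by have := p.property; omega
    simp only
    rw [hmk]
    linarith



end LampDL
end
end
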